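/- arXiv:1605.09061 — 2 statements merged into one kernel-verified Lean document; each statement's English description precedes it below -/
import Mathlib

section
/- For m, n ≥ 4, the set Y(m,n) is a NENO set: it is non-overlapping, and for every picture p ∈ Σ^{m,n} \ Y(m,n) there exists q ∈ Y(m,n) such that p and q overlap. -/
namespace Neno

variable {α : Type*}

/-- Block of size (h,k) is a tl-prefix of `p` and a br-prefix of `q`. -/
def TlAt (m n : ℕ) (p q : Fin m → Fin n → α) (h k : ℕ) : Prop :=
  1 ≤ h ∧ h ≤ m ∧ 1 ≤ k ∧ k ≤ n ∧
  ∀ (i j : ℕ), i < h → j < k →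
    ∀ (hi : i < m) (hj : j < n) (hi' : m - h + i < m) (hj' : n - k + j < n),
      p ⟨i, hi⟩ ⟨j, hj⟩ = q ⟨m - h + i, hi'⟩ ⟨n - k + j, hj'⟩

/-- Block of size (h,k) is a bl-prefix of `p` and a tr-prefix of `q`. -/
def BlAt (m n : ℕ) (p q : Fin m → Fin n → α) (h k : ℕ) : Prop :=
  1 ≤ h ∧ h ≤ m ∧ 1 ≤ k ∧ k ≤ n ∧
  ∀ (i j : ℕ), i < h → j < k →
    ∀ (hi' : m - h + i < m) (hj : j < n) (hi : i < m) (hj' : n - k + j < n),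
      p ⟨m - h + i, hi'⟩ ⟨j, hj⟩ = q ⟨i, hi⟩ ⟨n - k + j, hj'⟩

def OvAt (m n : ℕ) (p q : Fin m → Fin n → α) (h k : ℕ) : Prop :=
  TlAt m n p q h k ∨ TlAt m n q p h k ∨ BlAt m n p q h k ∨ BlAt m n q p h k

def Overlap (m n : ℕ) (p q : Fin m → Fin n → α) : Prop := ∃ h k, OvAt m n p q h k

def ProperOverlap (m n : ℕ) (p q : Fin m → Fin n → α) : Prop :=
  ∃ h k, (h < m ∨ k < n) ∧ OvAt m n p q h k

def FrameOverlap (m n : ℕ) (p q : Fin m → Fin n → α) : Prop :=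
  ∃ h k, (h = 1 ∨ k = 1) ∧ OvAt m n p q h k

def NonOverlapping (m n : ℕ) (X : Set (Fin m → Fin n → α)) : Prop :=
  ∀ p ∈ X, ∀ q ∈ X, ¬ ProperOverlap m n p q

def Unbordered (m n : ℕ) (p : Fin m → Fin n → α) : Prop := ¬ ProperOverlap m n p p

def FrameComplete (m n : ℕ) (X : Set (Fin m → Fin n → α)) : Prop :=
  (∀ p ∈ X, ∀ q ∈ X, ¬ FrameOverlap m n p q) ∧
  (∀ p, p ∉ X → ∃ q ∈ X, FrameOverlap m n p q)

/-- The prefix of length ℓ of `s` equals the suffix of length ℓ of `t`. -/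
def SOvAt (n : ℕ) (s t : Fin n → α) (ℓ : ℕ) : Prop :=
  1 ≤ ℓ ∧ ℓ ≤ n ∧ ∀ (i : ℕ), i < ℓ →
    ∀ (hi : i < n) (hi' : n - ℓ + i < n), s ⟨i, hi⟩ = t ⟨n - ℓ + i, hi'⟩

def SOverlap (n : ℕ) (s t : Fin n → α) : Prop := ∃ ℓ, SOvAt n s t ℓ ∨ SOvAt n t s ℓ

def CrossNonOverlapping (n : ℕ) (S T : Set (Fin n → α)) : Prop :=
  ∀ s ∈ S, ∀ t ∈ T, ¬ SOverlap n s t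

def Full (n : ℕ) (S T : Set (Fin n → α)) : Prop :=
  ∀ s : Fin n → α, s ∉ S ∪ T →
    (∃ s₁ ∈ S, SOverlap n s s₁) ∧ (∃ s₂ ∈ T, SOverlap n s s₂)

def firstRow (m n : ℕ) (hm : 0 < m) (p : Fin m → Fin n → α) : Fin n → α :=
  fun j => p ⟨0, hm⟩ j

def lastRow (m n : ℕ) (hm : 0 < m) (p : Fin m → Fin n → α) : Fin n → α :=
  fun j => p ⟨m - 1, Nat.sub_lt hm Nat.one_pos⟩ j

def firstCol (m n : ℕ) (hn : 0 < n) (p : Fin m → Fin n → α) : Fin m → α :=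
  fun i => p i ⟨0, hn⟩

def lastCol (m n : ℕ) (hn : 0 < n) (p : Fin m → Fin n → α) : Fin m → α :=
  fun i => p i ⟨n - 1, Nat.sub_lt hn Nat.one_pos⟩

/-- `s` has the suffix 110^k. -/
def HasSuffix110 (m : ℕ) (s : Fin m → Bool) (k : ℕ) : Prop :=
  k + 2 ≤ m ∧
  (∀ h : m - k - 2 < m, s ⟨m - k - 2, h⟩ = true) ∧
  (∀ h : m - k - 1 < m, s ⟨m - k - 1, h⟩ = true) ∧
  (∀ j, m - k ≤ j → ∀ hj : j < m, s ⟨j, hj⟩ = false)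

def allOnes (n : ℕ) : Fin n → Bool := fun _ => true

/-- The string 110^{m-2}. -/
def oneOneZeros (m : ℕ) : Fin m → Bool := fun i => decide (i.val < 2)

/-- S₂ = 0 Σ^{n-2} 0. -/
def S2 (n : ℕ) : Set (Fin n → Bool) :=
  {s | (∀ h : 0 < n, s ⟨0, h⟩ = false) ∧ (∀ h : n - 1 < n, s ⟨n - 1, h⟩ = false)}

/-- S₄ = 1w0 with w ≠ 0^{m-2} and no suffix in 110⁺. -/
def S4 (m : ℕ) : Set (Fin m → Bool) :=
  {s | (∀ h : 0 < m, s ⟨0, h⟩ = true) ∧ (∀ h : m - 1 < m, s ⟨m - 1, h⟩ = false) ∧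
       (∃ i, ∃ hi : i < m, 1 ≤ i ∧ i < m - 1 ∧ s ⟨i, hi⟩ = true) ∧
       ¬ ∃ k, 1 ≤ k ∧ HasSuffix110 m s k}

def XSet (m n : ℕ) : Set (Fin m → Fin n → Bool) :=
  {p | (∀ h : 0 < m, ∀ j, p ⟨0, h⟩ j = allOnes n j) ∧
       (∀ h : 0 < m, (fun j => p ⟨m - 1, Nat.sub_lt h Nat.one_pos⟩ j) ∈ S2 n) ∧
       (∀ h : 0 < n, ∀ i, p i ⟨0, h⟩ = oneOneZeros m i) ∧
       (∀ h : 0 < n, (fun i => p i ⟨n - 1, Nat.sub_lt h Nat.one_pos⟩) ∈ S4 m)}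

/-- Violation of condition 1: some column j (1-indexed 2..n) has all of rows 2..m-1 equal 0. -/
def Cond1Viol (m n : ℕ) (p : Fin m → Fin n → Bool) : Prop :=
  ∃ j, ∃ hj : j < n, 1 ≤ j ∧
    ∀ i, 1 ≤ i → i < m - 1 → ∀ hi : i < m, p ⟨i, hi⟩ ⟨j, hj⟩ = false

/-- Violation of condition 2 (0-indexed positions). -/
def Cond2Viol (m n : ℕ) (p : Fin m → Fin n → Bool) : Prop :=
  ∃ i j, ∃ hi : i < m, ∃ hj : j < n, ¬(i = 0 ∧ j = 0) ∧
    (∀ j', j ≤ j' → ∀ hj' : j' < n, p ⟨i, hi⟩ ⟨j', hj'⟩ = true) ∧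
    (∃ hi1 : i + 1 < m, p ⟨i + 1, hi1⟩ ⟨j, hj⟩ = true) ∧
    (∀ l, i + 2 ≤ l → ∀ hl : l < m, p ⟨l, hl⟩ ⟨j, hj⟩ = false)

def YSet (m n : ℕ) : Set (Fin m → Fin n → Bool) :=
  {p | p ∈ XSet m n ∧ ¬ Cond1Viol m n p ∧ ¬ Cond2Viol m n p}

/-- I(m) = 1ya, y ≠ 0^{m-2}, no suffix in 110*. -/
def ISet (m : ℕ) : Set (Fin m → Bool) :=
  {s | (∀ h : 0 < m, s ⟨0, h⟩ = true) ∧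
       (∃ i, ∃ hi : i < m, 1 ≤ i ∧ i < m - 1 ∧ s ⟨i, hi⟩ = true) ∧
       ¬ ∃ k, HasSuffix110 m s k}

/-- L(m) = 1x0, x ≠ 0^{m-2}, no suffix in 110*. -/
def LSet (m : ℕ) : Set (Fin m → Bool) :=
  {s | (∀ h : 0 < m, s ⟨0, h⟩ = true) ∧ (∀ h : m - 1 < m, s ⟨m - 1, h⟩ = false) ∧
       (∃ i, ∃ hi : i < m, 1 ≤ i ∧ i < m - 1 ∧ s ⟨i, hi⟩ = true) ∧
       ¬ ∃ k, HasSuffix110 m s k}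

def ZSet (m n : ℕ) : Set (Fin m → Fin n → Bool) :=
  {p | (∀ h : 0 < m, ∀ j, p ⟨0, h⟩ j = true) ∧
       (∀ h : 0 < n, ∀ i, p i ⟨0, h⟩ = oneOneZeros m i) ∧
       (∀ j, 1 ≤ j → j < n - 1 → ∀ hj : j < n, (fun i => p i ⟨j, hj⟩) ∈ ISet m) ∧
       (∀ h : 0 < n, (fun i => p i ⟨n - 1, Nat.sub_lt h Nat.one_pos⟩) ∈ LSet m)}


/-! ### Auxiliary machinery for stmt13 -/

/-- ℕ-indexed accessor for a picture. -/
def NP (m n : ℕ) (p : Fin m → Fin n → Bool) (i j : ℕ) : Bool :=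
  if h : i < m ∧ j < n then p ⟨i, h.1⟩ ⟨j, h.2⟩ else false

lemma NP_eq {m n : ℕ} (p : Fin m → Fin n → Bool) (i j : ℕ) (hi : i < m) (hj : j < n) :
    p ⟨i, hi⟩ ⟨j, hj⟩ = NP m n p i j := by simp [NP, hi, hj]

/-- Build a picture from a ℕ-indexed function. -/
def mkP (m n : ℕ) (Q : ℕ → ℕ → Bool) : Fin m → Fin n → Bool := fun i j => Q i.1 j.1

lemma NP_mkP {m n : ℕ} (Q : ℕ → ℕ → Bool) (i j : ℕ) (hi : i < m) (hj : j < n) :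
    NP m n (mkP m n Q) i j = Q i j := by simp [NP, hi, hj, mkP]

/-- Y-membership from ℕ-level conditions. -/
lemma mem_Y_of {m n : ℕ} (hm : 4 ≤ m) (hn : 4 ≤ n) (Q : ℕ → ℕ → Bool)
    (hrow0 : ∀ j, j < n → Q 0 j = true)
    (hcol0 : ∀ i, i < m → Q i 0 = decide (i < 2))
    (hlast0 : Q (m-1) (n-1) = false)
    (hlastint : ∃ i, 1 ≤ i ∧ i < m - 1 ∧ Q i (n-1) = true)
    (hlastsuf : ∀ k, 1 ≤ k → k + 2 ≤ m →
      ¬(Q (m-k-2) (n-1) = true ∧ Q (m-k-1) (n-1) = true ∧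
        ∀ l, m - k ≤ l → l < m → Q l (n-1) = false))
    (hc1 : ∀ j, 1 ≤ j → j < n → ∃ i, 1 ≤ i ∧ i < m - 1 ∧ Q i j = true)
    (hc2 : ∀ i j, i < m → j < n → ¬(i = 0 ∧ j = 0) →
      (∀ j', j ≤ j' → j' < n → Q i j' = true) → i + 1 < m → Q (i+1) j = true →
      ∃ l, i + 2 ≤ l ∧ l < m ∧ Q l j = true) :
    mkP m n Q ∈ YSet m n := by
  have hm0 : 0 < m := by omega
  have hn0 : 0 < n := by omega
  refine ⟨⟨?_, ?_, ?_, ?_⟩, ?_, ?_⟩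
  · intro _ j
    show Q 0 j.1 = allOnes n j
    rw [hrow0 j.1 j.2]; rfl
  · intro _
    constructor
    · intro _
      show Q (m-1) 0 = false
      rw [hcol0 _ (by omega)]; simp; omega
    · intro _
      exact hlast0
  · intro _ i
    show Q i.1 0 = oneOneZeros m i
    rw [hcol0 _ i.2]; rfl
  · intro _
    refine ⟨fun _ => hrow0 _ (by omega), fun _ => hlast0, ?_, ?_⟩
    · obtain ⟨i, h1, h2, h3⟩ := hlastint
      exact ⟨i, by omega, h1, h2, h3⟩
    · rintro ⟨k, hk1, hk2, ha, hb, hc⟩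
      exact hlastsuf k hk1 hk2 ⟨ha (by omega), hb (by omega),
        fun l hl1 hl2 => hc l hl1 hl2⟩
  · rintro ⟨j, hj, hj1, hall⟩
    obtain ⟨i, h1, h2, h3⟩ := hc1 j hj1 hj
    have h4 := hall i h1 h2 (by omega)
    simp only [mkP] at h4
    rw [h4] at h3; cases h3
  · rintro ⟨i, j, hi, hj, hne, hrow, ⟨hi1, hval⟩, hzero⟩
    obtain ⟨l, hl1, hl2, hQ⟩ := hc2 i j hi hj hne
      (fun j' hj1 hj2 => hrow j' hj1 hj2) hi1 hval
    have h5 := hzero l hl1 hl2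
    simp only [mkP] at h5
    rw [h5] at hQ; cases hQ

/-- The column with 1 exactly at positions 0 and a (2 ≤ a ≤ m-2) is in S4;
    here we record the facts needed by `mem_Y_of` for such a last column. -/
lemma lastcol_facts {m : ℕ} (hm : 4 ≤ m) (a : ℕ) (ha2 : 2 ≤ a) (ham : a ≤ m - 2) :
    ((fun i : ℕ => decide (i = 0 ∨ i = a)) (m-1) = false) ∧
    (∃ i, 1 ≤ i ∧ i < m - 1 ∧ (fun i : ℕ => decide (i = 0 ∨ i = a)) i = true) ∧
    (∀ k, 1 ≤ k → k + 2 ≤ m →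
      ¬((fun i : ℕ => decide (i = 0 ∨ i = a)) (m-k-2) = true ∧
        (fun i : ℕ => decide (i = 0 ∨ i = a)) (m-k-1) = true ∧
        ∀ l, m - k ≤ l → l < m → (fun i : ℕ => decide (i = 0 ∨ i = a)) l = false)) := by
  refine ⟨by simp; omega, ⟨a, by omega, by omega, by simp⟩, ?_⟩
  rintro k hk1 hk2 ⟨h1, h2, -⟩
  simp only [decide_eq_true_eq] at h1 h2
  omega

section OverlapIntro
variable {m n : ℕ} (p q : Fin m → Fin n → Bool)

lemma overlap_tl_pq (h k : ℕ) (hh1 : 1 ≤ h) (hh : h ≤ m) (hk1 : 1 ≤ k) (hk : k ≤ n)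
    (he : ∀ i j, i < h → j < k → NP m n p i j = NP m n q (m-h+i) (n-k+j)) :
    Overlap m n p q :=
  ⟨h, k, Or.inl ⟨hh1, hh, hk1, hk, fun i j hi hj hi' hj' hi'' hj'' => by
    rw [NP_eq p i j hi' hj', NP_eq q _ _ hi'' hj'', he i j hi hj]⟩⟩

lemma overlap_tl_qp (h k : ℕ) (hh1 : 1 ≤ h) (hh : h ≤ m) (hk1 : 1 ≤ k) (hk : k ≤ n)
    (he : ∀ i j, i < h → j < k → NP m n q i j = NP m n p (m-h+i) (n-k+j)) :
    Overlap m n p q :=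
  ⟨h, k, Or.inr (Or.inl ⟨hh1, hh, hk1, hk, fun i j hi hj hi' hj' hi'' hj'' => by
    rw [NP_eq q i j hi' hj', NP_eq p _ _ hi'' hj'', he i j hi hj]⟩)⟩

lemma overlap_bl_pq (h k : ℕ) (hh1 : 1 ≤ h) (hh : h ≤ m) (hk1 : 1 ≤ k) (hk : k ≤ n)
    (he : ∀ i j, i < h → j < k → NP m n p (m-h+i) j = NP m n q i (n-k+j)) :
    Overlap m n p q :=
  ⟨h, k, Or.inr (Or.inr (Or.inl ⟨hh1, hh, hk1, hk, fun i j hi hj hi' hj' hi'' hj'' => by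
    rw [NP_eq p _ j hi' hj', NP_eq q i _ hi'' hj'', he i j hi hj]⟩))⟩

lemma overlap_bl_qp (h k : ℕ) (hh1 : 1 ≤ h) (hh : h ≤ m) (hk1 : 1 ≤ k) (hk : k ≤ n)
    (he : ∀ i j, i < h → j < k → NP m n q (m-h+i) j = NP m n p i (n-k+j)) :
    Overlap m n p q :=
  ⟨h, k, Or.inr (Or.inr (Or.inr ⟨hh1, hh, hk1, hk, fun i j hi hj hi' hj' hi'' hj'' => by
    rw [NP_eq q _ j hi' hj', NP_eq p i _ hi'' hj'', he i j hi hj]⟩))⟩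

end OverlapIntro

/-- column 110^(m-2) -/
def c0col (i : ℕ) : Bool := decide (i < 2)
/-- column with ones at 0 and m-2 -/
def gcol (m i : ℕ) : Bool := decide (i = 0 ∨ i = m - 2)
/-- column with ones at 0, 1, m-1 -/
def h1col (m i : ℕ) : Bool := decide (i = 0 ∨ i = 1 ∨ i = m - 1)

/-- base witness: first column 110^(m-2), all other columns gcol -/
def Q0 (m : ℕ) (i j : ℕ) : Bool := if j = 0 then c0col i else gcol m i

lemma gcol_ff {m i : ℕ} (h0 : i ≠ 0) (h2 : i ≠ m-2) : gcol m i = false := by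
  simp [gcol]; omega

lemma gcol_tt0 {m : ℕ} : gcol m 0 = true := by simp [gcol]

lemma gcol_tt2 {m : ℕ} : gcol m (m-2) = true := by simp [gcol]

lemma c0col_tt {i : ℕ} (h : i < 2) : c0col i = true := by simp [c0col]; omega

lemma c0col_ff {i : ℕ} (h : 2 ≤ i) : c0col i = false := by simp [c0col]; omega

lemma Q0_eval {m : ℕ} (i j : ℕ) (hj : j ≠ 0) : Q0 m i j = gcol m i := if_neg hj

lemma Q0_eval0 {m : ℕ} (i : ℕ) : Q0 m i 0 = c0col i := rfl

lemma Q0_mem_Y {m n : ℕ} (hm : 4 ≤ m) (hn : 4 ≤ n) : mkP m n (Q0 m) ∈ YSet m n := by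
  apply mem_Y_of hm hn
  · intro j hj
    by_cases hj0 : j = 0 <;> simp [Q0, hj0, c0col, gcol]
  · intro i hi; simp [Q0, c0col]
  · have := lastcol_facts hm (m-2) (by omega) (le_refl _)
    simpa [Q0, gcol, show ¬(n-1=0) by omega] using this.1
  · refine ⟨m-2, by omega, by omega, ?_⟩
    simp [Q0, gcol, show ¬(n-1=0) by omega]
  · intro k hk1 hk2
    have := (lastcol_facts hm (m-2) (by omega) (le_refl _)).2.2 k hk1 hk2
    simpa [Q0, gcol, show ¬(n-1=0) by omega] using this
  · intro j hj1 hj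
    refine ⟨m-2, by omega, by omega, ?_⟩
    simp [Q0, gcol, show ¬(j=0) by omega]
  · intro i j hi hj hne hrow hi1 hstep
    rcases Nat.eq_zero_or_pos i with hi0 | hipos
    · subst hi0
      have hj1 : 1 ≤ j := by omega
      exfalso
      revert hstep
      simp [Q0, gcol, show ¬(j=0) by omega]
      omega
    · have h4 := hrow (n-1) (by omega) (by omega)
      by_cases him : i = m - 2
      · exfalso; revert hstep
        by_cases hj0 : j = 0 <;> simp [Q0, hj0, gcol, c0col] <;> omega
      · exfalso; revert h4
        simp [Q0, gcol, show ¬(n-1=0) by omega]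
        omega

/-- witness for: p has a zero in its first row at column j ≥ 1 -/
def Q6 (m n : ℕ) (p : Fin m → Fin n → Bool) (j : ℕ) (i t : ℕ) : Bool :=
  if t = 0 then c0col i
  else if t < n - j then (if NP m n p 0 (j+t) then h1col m i else gcol m i)
  else gcol m i

lemma case6 {m n : ℕ} (hm : 4 ≤ m) (hn : 4 ≤ n) (p : Fin m → Fin n → Bool)
    (j : ℕ) (hj1 : 1 ≤ j) (hj : j < n) (hP0j : NP m n p 0 j = false) :
    ∃ q ∈ YSet m n, Overlap m n p q := by
  have hgval : ∀ i, Q6 m n p j i (n-1) = gcol m i := by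
    intro i; simp [Q6, show ¬(n-1=0) by omega, show ¬(n-1 < n-j) by omega]
  refine ⟨mkP m n (Q6 m n p j), ?_, ?_⟩
  · apply mem_Y_of hm hn
    · intro t ht
      by_cases ht0 : t = 0
      · simp [Q6, ht0, c0col]
      · by_cases htk : t < n - j <;> by_cases hPt : NP m n p 0 (j+t) = true <;>
          simp [Q6, ht0, htk, hPt, h1col, gcol]
    · intro i hi; simp [Q6, c0col]
    · rw [hgval]
      simpa [gcol] using (lastcol_facts hm (m-2) (by omega) (le_refl _)).1
    · refine ⟨m-2, by omega, by omega, ?_⟩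
      rw [hgval]; simp [gcol]
    · intro k hk1 hk2
      have := (lastcol_facts hm (m-2) (by omega) (le_refl _)).2.2 k hk1 hk2
      simpa [hgval, gcol] using this
    · intro t ht1 ht
      by_cases hc : t < n - j ∧ NP m n p 0 (j+t) = true
      · exact ⟨1, by omega, by omega, by
          simp [Q6, show ¬(t=0) by omega, hc.1, hc.2, h1col]⟩
      · refine ⟨m-2, by omega, by omega, ?_⟩
        by_cases htk : t < n - j
        · have hPt : ¬ (NP m n p 0 (j+t) = true) := fun hh => hc ⟨htk, hh⟩
          simp [Q6, show ¬(t=0) by omega, htk, hPt, gcol]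
        · simp [Q6, show ¬(t=0) by omega, htk, gcol]
    · intro i t hi ht hne hrow hi1 hstep
      rcases Nat.eq_zero_or_pos i with hi0 | hipos
      · subst hi0
        have ht1 : 1 ≤ t := by omega
        by_cases hc : t < n - j ∧ NP m n p 0 (j+t) = true
        · refine ⟨m-1, by omega, by omega, ?_⟩
          simp [Q6, show ¬(t=0) by omega, hc.1, hc.2, h1col]
        · exfalso; revert hstep
          by_cases htk : t < n - j
          · have hPt : ¬ (NP m n p 0 (j+t) = true) := fun hh => hc ⟨htk, hh⟩
            simp [Q6, show ¬(t=0) by omega, htk, hPt, gcol]; omega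
          · simp [Q6, show ¬(t=0) by omega, htk, gcol]; omega
      · exfalso
        have h4 := hrow (n-1) (by omega) (by omega)
        rw [hgval] at h4
        have him : i = m - 2 := by
          revert h4; simp [gcol]; omega
        subst him
        have h5 := hrow t (le_refl _) ht
        revert h5 hstep
        by_cases ht0 : t = 0
        · simp [Q6, ht0, c0col]; omega
        · by_cases htk : t < n - j <;> by_cases hPt : NP m n p 0 (j+t) = true <;>
            simp [Q6, ht0, htk, hPt, h1col, gcol] <;> omega
  · refine overlap_bl_qp p _ 1 (n-j) (le_refl 1) (by omega) (by omega) (by omega) ?_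
    intro i t hi htk
    have hi0 : i = 0 := by omega
    subst hi0
    have hjj : n - (n - j) + t = j + t := by omega
    rw [NP_mkP _ _ _ (by omega) (by omega), hjj]
    by_cases ht0 : t = 0
    · subst ht0
      have hz : NP m n p 0 (j+0) = false := by rw [Nat.add_zero]; exact hP0j
      simp [Q6, c0col, show ¬(m-1<2) by omega, hz]
      exact hP0j
    · have htk' : t < n - j := by omega
      by_cases hPt : NP m n p 0 (j+t) = true
      · simp [Q6, ht0, htk', hPt, h1col]
      · rw [Bool.not_eq_true] at hPt
        simp [Q6, ht0, htk', hPt, h1col, gcol]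
        omega

/-- witness for a cond2 violation of p at (i,j) with 2 ≤ i ≤ m-2, 1 ≤ j -/
def QA (m n : ℕ) (p : Fin m → Fin n → Bool) (i j : ℕ) (i' t : ℕ) : Bool :=
  if t = 0 then c0col i'
  else if t < n - j then (if i' < m - i then NP m n p (i+i') (j+t) else decide (i' = m-2))
  else gcol m i'

lemma caseA {m n : ℕ} (hm : 4 ≤ m) (hn : 4 ≤ n) (p : Fin m → Fin n → Bool)
    (i j : ℕ) (h2i : 2 ≤ i) (him : i ≤ m - 2) (hj1 : 1 ≤ j) (hj : j < n)
    (hrow : ∀ x, j ≤ x → x < n → NP m n p i x = true)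
    (hstep : NP m n p (i+1) j = true)
    (hzero : ∀ l, i + 2 ≤ l → l < m → NP m n p l j = false) :
    ∃ q ∈ YSet m n, Overlap m n p q := by
  have hgval : ∀ i', QA m n p i j i' (n-1) = gcol m i' := by
    intro i'; simp [QA, show ¬(n-1=0) by omega, show ¬(n-1 < n-j) by omega]
  have hm2 : ∀ t, 1 ≤ t → t < n → QA m n p i j (m-2) t = true := by
    intro t ht1 ht
    by_cases htk : t < n - j <;>
      simp [QA, show ¬(t=0) by omega, htk, gcol, show ¬(m-2 < m-i) by omega]
  refine ⟨mkP m n (QA m n p i j), ?_, ?_⟩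
  · apply mem_Y_of hm hn
    · intro t ht
      by_cases ht0 : t = 0
      · simp [QA, ht0, c0col]
      · by_cases htk : t < n - j
        · have := hrow (j+t) (by omega) (by omega)
          simp [QA, ht0, htk, show (0:ℕ) < m - i by omega, this]
        · simp [QA, ht0, htk, gcol]
    · intro i' hi'; simp [QA, c0col]
    · rw [hgval]
      simpa [gcol] using (lastcol_facts hm (m-2) (by omega) (le_refl _)).1
    · exact ⟨m-2, by omega, by omega, by rw [hgval]; simp [gcol]⟩
    · intro k hk1 hk2
      have := (lastcol_facts hm (m-2) (by omega) (le_refl _)).2.2 k hk1 hk2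
      simpa [hgval, gcol] using this
    · intro t ht1 ht
      exact ⟨m-2, by omega, by omega, hm2 t ht1 ht⟩
    · intro i' t hi' ht hne hrowq hi1 hstepq
      rcases Nat.eq_zero_or_pos i' with hi0 | hipos
      · subst hi0
        exact ⟨m-2, by omega, by omega, hm2 t (by omega) ht⟩
      · exfalso
        by_cases hik : i' = m - 2
        · subst hik
          revert hstepq
          by_cases ht0 : t = 0
          · simp [QA, ht0, c0col]; omega
          · by_cases htk : t < n - j <;>
              simp [QA, ht0, htk, gcol, show ¬(m-1 < m-i) by omega] <;> omega
        · have h4 := hrowq (n-1) (by omega) (by omega)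
          rw [hgval] at h4
          revert h4; simp [gcol]; omega
  · refine overlap_tl_qp p _ (m-i) (n-j) (by omega) (by omega) (by omega) (by omega) ?_
    intro l t hl htk
    have e1 : m - (m - i) + l = i + l := by omega
    have e2 : n - (n - j) + t = j + t := by omega
    rw [NP_mkP _ _ _ (by omega) (by omega), e1, e2]
    by_cases ht0 : t = 0
    · subst ht0
      rcases Nat.lt_or_ge l 2 with hl2 | hl2
      · interval_cases l
        · simpa [QA, c0col] using (hrow j (le_refl _) hj).symm
        · simpa [QA, c0col] using hstep.symm
      · have := hzero (i+l) (by omega) (by omega)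
        simp [QA, c0col, show ¬(l<2) by omega, Nat.add_zero, this]
    · simp [QA, ht0, htk, show l < m - i from hl]

/-- witness for a cond2 violation of p at (1,c), c ≤ n-2 -/
def QC (m n : ℕ) (p : Fin m → Fin n → Bool) (c : ℕ) (i' t : ℕ) : Bool :=
  if t < n - c then (if i' ≤ m-2 then NP m n p (1+i') (c+t) else false) else gcol m i'

lemma caseHc {m n : ℕ} (hm : 4 ≤ m) (hn : 4 ≤ n) (p : Fin m → Fin n → Bool)
    (c : ℕ) (hc1c : 1 ≤ c) (hcn : c ≤ n - 2)
    (hrow1 : ∀ x, c ≤ x → x < n → NP m n p 1 x = true)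
    (hP2 : NP m n p 2 c = true)
    (hz : ∀ l, 3 ≤ l → l < m → NP m n p l c = false)
    (N20 : ∀ c', c < c' → c' < n → ¬(∀ l, 2 ≤ l → l < m → NP m n p l c' = false))
    (N21 : ∀ c', c < c' → c' < n →
        ¬(NP m n p 2 c' = true ∧ ∀ l, 3 ≤ l → l < m → NP m n p l c' = false)) :
    ∃ q ∈ YSet m n, Overlap m n p q := by
  have hgval : ∀ i', QC m n p c i' (n-1) = gcol m i' := by
    intro i'; simp [QC, show ¬(n-1 < n-c) by omega]
  refine ⟨mkP m n (QC m n p c), ?_, ?_⟩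
  · apply mem_Y_of hm hn
    · intro t ht
      by_cases htk : t < n - c
      · simp [QC, htk, show (0:ℕ) ≤ m-2 by omega, hrow1 (c+t) (by omega) (by omega)]
      · simp [QC, htk, gcol]
    · intro i' hi'
      have h0 : (0:ℕ) < n - c := by omega
      rcases Nat.lt_or_ge i' 2 with h2 | h2
      · interval_cases i'
        · simpa [QC, h0, show (0:ℕ) ≤ m-2 by omega, c0col] using
            hrow1 c (le_refl _) (by omega)
        · simpa [QC, h0, show (1:ℕ) ≤ m-2 by omega, c0col] using hP2
      · by_cases him : i' ≤ m - 2
        · have := hz (1+i') (by omega) (by omega)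
          simp [QC, h0, him, this, c0col]; omega
        · simp [QC, h0, him, c0col]; omega
    · rw [hgval]
      simpa [gcol] using (lastcol_facts hm (m-2) (by omega) (le_refl _)).1
    · exact ⟨m-2, by omega, by omega, by rw [hgval]; simp [gcol]⟩
    · intro k hk1 hk2
      have := (lastcol_facts hm (m-2) (by omega) (le_refl _)).2.2 k hk1 hk2
      simpa [hgval, gcol] using this
    · intro t ht1 ht
      by_cases htk : t < n - c
      · by_cases hex : ∃ l, 2 ≤ l ∧ l < m ∧ NP m n p l (c+t) = true
        · obtain ⟨l, hl2, hlm, hv⟩ := hex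
          refine ⟨l-1, by omega, by omega, ?_⟩
          have e : 1 + (l-1) = l := by omega
          simp [QC, htk, show l-1 ≤ m-2 by omega, e, hv]
        · exfalso
          push_neg at hex
          refine N20 (c+t) (by omega) (by omega) ?_
          intro l hl2 hlm
          have := hex l hl2 hlm
          revert this; cases (NP m n p l (c+t)) <;> simp
      · exact ⟨m-2, by omega, by omega, by simp [QC, htk, gcol]⟩
    · intro i' t hi' ht hne hrowq hi1 hstepq
      rcases Nat.eq_zero_or_pos i' with hi0 | hipos
      · subst hi0
        by_cases htk : t < n - c
        · have hPt : NP m n p 2 (c+t) = true := by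
            have := hstepq
            simpa [QC, htk, show (1:ℕ) ≤ m-2 by omega] using this
          by_cases hex : ∃ l', 3 ≤ l' ∧ l' < m ∧ NP m n p l' (c+t) = true
          · obtain ⟨l', hl3, hlm, hv⟩ := hex
            refine ⟨l'-1, by omega, by omega, ?_⟩
            have e : 1 + (l'-1) = l' := by omega
            simp [QC, htk, show l'-1 ≤ m-2 by omega, e, hv]
          · exfalso
            have ht1 : 1 ≤ t := by omega
            push_neg at hex
            refine N21 (c+t) (by omega) (by omega) ⟨hPt, ?_⟩
            intro l hl3 hlm
            have := hex l hl3 hlm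
            revert this; cases (NP m n p l (c+t)) <;> simp
        · exfalso; revert hstepq; simp [QC, htk, gcol]; omega
      · exfalso
        by_cases hik : i' = m - 2
        · subst hik
          revert hstepq
          by_cases htk : t < n - c <;>
            simp [QC, htk, gcol, show ¬(m-1 ≤ m-2) by omega] <;> omega
        · have h4 := hrowq (n-1) (by omega) (by omega)
          rw [hgval] at h4
          revert h4; simp [gcol]; omega
  · refine overlap_tl_qp p _ (m-1) (n-c) (by omega) (by omega) (by omega) (by omega) ?_
    intro l t hl htk
    have e1 : m - (m - 1) + l = 1 + l := by omega
    have e2 : n - (n - c) + t = c + t := by omega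
    rw [NP_mkP _ _ _ (by omega) (by omega), e1, e2]
    simp [QC, htk, show l ≤ m-2 by omega]

/-- witness for a cond2 violation of p at (0,c), c ≤ n-2 -/
def QD (m n : ℕ) (p : Fin m → Fin n → Bool) (c : ℕ) (i' t : ℕ) : Bool :=
  if t < n - c then NP m n p i' (c+t) else gcol m i'

lemma caseHd {m n : ℕ} (hm : 4 ≤ m) (hn : 4 ≤ n) (p : Fin m → Fin n → Bool)
    (c : ℕ) (hc1c : 1 ≤ c) (hcn : c ≤ n - 2)
    (hrow0all : ∀ x, x < n → NP m n p 0 x = true)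
    (hP1 : NP m n p 1 c = true)
    (hz : ∀ l, 2 ≤ l → l < m → NP m n p l c = false)
    (NV1 : ∀ c', c < c' → c' < n → ∃ l, 1 ≤ l ∧ l ≤ m-2 ∧ NP m n p l c' = true)
    (N20 : ∀ c', c < c' → c' < n →
        ¬(NP m n p 1 c' = true ∧ ∀ l, 2 ≤ l → l < m → NP m n p l c' = false))
    (NE : ∀ c', c ≤ c' → c' < n →
        ¬((∀ x, c' ≤ x → x < n → NP m n p (m-2) x = true) ∧ NP m n p (m-1) c' = true)) :
    ∃ q ∈ YSet m n, Overlap m n p q := by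
  have hgval : ∀ i', QD m n p c i' (n-1) = gcol m i' := by
    intro i'; simp [QD, show ¬(n-1 < n-c) by omega]
  refine ⟨mkP m n (QD m n p c), ?_, ?_⟩
  · apply mem_Y_of hm hn
    · intro t ht
      by_cases htk : t < n - c
      · simp [QD, htk, hrow0all (c+t) (by omega)]
      · simp [QD, htk, gcol]
    · intro i' hi'
      have h0 : (0:ℕ) < n - c := by omega
      rcases Nat.lt_or_ge i' 2 with h2 | h2
      · interval_cases i'
        · simpa [QD, h0, c0col] using hrow0all c (by omega)
        · simpa [QD, h0, c0col] using hP1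
      · have := hz i' h2 hi'
        simp [QD, h0, this, c0col]; omega
    · rw [hgval]
      simpa [gcol] using (lastcol_facts hm (m-2) (by omega) (le_refl _)).1
    · exact ⟨m-2, by omega, by omega, by rw [hgval]; simp [gcol]⟩
    · intro k hk1 hk2
      have := (lastcol_facts hm (m-2) (by omega) (le_refl _)).2.2 k hk1 hk2
      simpa [hgval, gcol] using this
    · intro t ht1 ht
      by_cases htk : t < n - c
      · obtain ⟨l, hl1, hl2, hv⟩ := NV1 (c+t) (by omega) (by omega)
        exact ⟨l, hl1, by omega, by simp [QD, htk, hv]⟩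
      · exact ⟨m-2, by omega, by omega, by simp [QD, htk, gcol]⟩
    · intro i' t hi' ht hne hrowq hi1 hstepq
      rcases Nat.eq_zero_or_pos i' with hi0 | hipos
      · subst hi0
        by_cases htk : t < n - c
        · have hPt : NP m n p 1 (c+t) = true := by
            have := hstepq; simpa [QD, htk] using this
          by_cases hex : ∃ l, 2 ≤ l ∧ l < m ∧ NP m n p l (c+t) = true
          · obtain ⟨l, hl2, hlm, hv⟩ := hex
            exact ⟨l, hl2, hlm, by simp [QD, htk, hv]⟩
          · exfalso
            have ht1 : 1 ≤ t := by omega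
            push_neg at hex
            refine N20 (c+t) (by omega) (by omega) ⟨hPt, ?_⟩
            intro l hl2 hlm
            have := hex l hl2 hlm
            revert this; cases (NP m n p l (c+t)) <;> simp
        · exfalso; revert hstepq; simp [QD, htk, gcol]; omega
      · exfalso
        by_cases hik : i' = m - 2
        · subst hik
          by_cases htk : t < n - c
          · have hPm1 : NP m n p (m-1) (c+t) = true := by
              have := hstepq
              simpa [QD, htk, show m-2+1 = m-1 by omega] using this
            refine NE (c+t) (by omega) (by omega) ⟨?_, hPm1⟩
            intro x hx1 hx2
            have hx3 : x - c < n - c := by omega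
            have := hrowq (x-c) (by omega) (by omega)
            simpa [QD, hx3, show c + (x-c) = x by omega] using this
          · revert hstepq; simp [QD, htk, gcol, show m-2+1=m-1 by omega]; omega
        · have h4 := hrowq (n-1) (by omega) (by omega)
          rw [hgval] at h4
          revert h4; simp [gcol]; omega
  · refine overlap_tl_qp p _ m (n-c) (by omega) (le_refl _) (by omega) (by omega) ?_
    intro l t hl htk
    have e1 : m - m + l = l := by omega
    have e2 : n - (n - c) + t = c + t := by omega
    rw [NP_mkP _ _ _ (by omega) (by omega), e1, e2]
    simp [QD, htk]

/-- witness for a cond1 violation of p at column c ≤ n-2 -/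
def QB (m n : ℕ) (p : Fin m → Fin n → Bool) (c i₀ : ℕ) (i' t : ℕ) : Bool :=
  if t = 0 then c0col i'
  else if t < n - c then (if i' = 0 then true else NP m n p (i'-1) (c+t))
  else decide (i' = 0 ∨ i' = i₀)

lemma caseHb {m n : ℕ} (hm : 4 ≤ m) (hn : 4 ≤ n) (p : Fin m → Fin n → Bool)
    (c i₀ : ℕ) (hc1c : 1 ≤ c) (hcn : c ≤ n - 2)
    (hi2 : 2 ≤ i₀) (him : i₀ ≤ m - 2)
    (hrow0all : ∀ x, x < n → NP m n p 0 x = true)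
    (hV1 : ∀ l, 1 ≤ l → l ≤ m - 2 → NP m n p l c = false)
    (hsi : NP m n p (i₀-1) (n-1) = false)
    (NV1 : ∀ c', c < c' → c' < n → ∃ l, 1 ≤ l ∧ l ≤ m-2 ∧ NP m n p l c' = true) :
    ∃ q ∈ YSet m n, Overlap m n p q := by
  have hgval : ∀ i', QB m n p c i₀ i' (n-1) = decide (i' = 0 ∨ i' = i₀) := by
    intro i'; simp [QB, show ¬(n-1=0) by omega, show ¬(n-1 < n-c) by omega]
  refine ⟨mkP m n (QB m n p c i₀), ?_, ?_⟩
  · apply mem_Y_of hm hn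
    · intro t ht
      by_cases ht0 : t = 0
      · simp [QB, ht0, c0col]
      · by_cases htk : t < n - c <;> simp [QB, ht0, htk]
    · intro i' hi'; simp [QB, c0col]
    · rw [hgval]
      exact (lastcol_facts hm i₀ hi2 him).1
    · obtain ⟨a, h1, h2, h3⟩ := (lastcol_facts hm i₀ hi2 him).2.1
      exact ⟨a, h1, h2, by rw [hgval]; exact h3⟩
    · intro k hk1 hk2
      have := (lastcol_facts hm i₀ hi2 him).2.2 k hk1 hk2
      simpa [hgval] using this
    · intro t ht1 ht
      by_cases htk : t < n - c
      · exact ⟨1, le_refl _, by omega, by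
          simp [QB, show ¬(t=0) by omega, htk, hrow0all (c+t) (by omega)]⟩
      · exact ⟨i₀, by omega, by omega, by simp [QB, show ¬(t=0) by omega, htk]⟩
    · intro i' t hi' ht hne hrowq hi1 hstepq
      rcases Nat.eq_zero_or_pos i' with hi0 | hipos
      · subst hi0
        have ht1 : 1 ≤ t := by omega
        by_cases htk : t < n - c
        · obtain ⟨l, hl1, hl2, hv⟩ := NV1 (c+t) (by omega) (by omega)
          refine ⟨l+1, by omega, by omega, ?_⟩
          simp [QB, show ¬(t=0) by omega, htk, show ¬(l+1=0) by omega, hv]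
        · exfalso; revert hstepq
          simp [QB, show ¬(t=0) by omega, htk]; omega
      · exfalso
        by_cases hik : i' = i₀
        · by_cases htk : t ≤ n - c - 1
          · have h4 := hrowq (n-c-1) htk (by omega)
            rw [hik] at h4
            revert h4
            simp [QB, show ¬(n-c-1=0) by omega, show n-c-1 < n-c by omega,
              show ¬(i₀=0) by omega, show c+(n-c-1) = n-1 by omega, hsi]
          · rw [hik] at hstepq
            revert hstepq
            simp [QB, show ¬(t=0) by omega, show ¬(t < n-c) by omega]
        · have h4 := hrowq (n-1) (by omega) (by omega)
          rw [hgval] at h4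
          revert h4; simp; omega
  · refine overlap_bl_qp p _ (m-1) (n-c) (by omega) (by omega) (by omega) (by omega) ?_
    intro l t hl htk
    have e1 : m - (m - 1) + l = l + 1 := by omega
    have e2 : n - (n - c) + t = c + t := by omega
    rw [e1, e2, NP_mkP _ _ _ (by omega) (by omega)]
    by_cases ht0 : t = 0
    · subst ht0
      rcases Nat.eq_zero_or_pos l with hl0 | hl1
      · subst hl0
        simpa [QB, c0col] using (hrow0all c (by omega)).symm
      · have := hV1 l hl1 (by omega)
        simp [QB, c0col, show ¬(l+1<2) by omega, Nat.add_zero, this]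
    · simp [QB, ht0, htk, show ¬(l+1=0) by omega]

/-- basic frame facts of a member of Y, in ℕ form -/
lemma Y_facts {m n : ℕ} (hm : 4 ≤ m) (hn : 4 ≤ n) (r : Fin m → Fin n → Bool)
    (hr : r ∈ YSet m n) :
    (∀ j, j < n → NP m n r 0 j = true) ∧
    (∀ i, i < m → NP m n r i 0 = decide (i < 2)) ∧
    NP m n r (m-1) (n-1) = false := by
  obtain ⟨⟨hX1, hX2, hX3, hX4⟩, hC1, hC2⟩ := hr
  refine ⟨?_, ?_, ?_⟩
  · intro j hj
    rw [← NP_eq r 0 j (by omega) hj]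
    exact hX1 (by omega) ⟨j, hj⟩
  · intro i hi
    rw [← NP_eq r i 0 hi (by omega)]
    exact hX3 (by omega) ⟨i, hi⟩
  · rw [← NP_eq r (m-1) (n-1) (by omega) (by omega)]
    exact (hX4 (by omega)).2.1 (by omega)

lemma no_TlAt {m n : ℕ} (hm : 4 ≤ m) (hn : 4 ≤ n) (p q : Fin m → Fin n → Bool)
    (hp : p ∈ YSet m n) (hq : q ∈ YSet m n) (h k : ℕ) (hT : TlAt m n p q h k) :
    h = m ∧ k = n := by
  obtain ⟨hh1, hhm, hk1, hkn, he⟩ := hT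
  obtain ⟨prow0, pcol0, pbr⟩ := Y_facts hm hn p hp
  obtain ⟨qrow0, qcol0, qbr⟩ := Y_facts hm hn q hq
  have ep : ∀ i j, i < h → j < k → NP m n p i j = NP m n q (m-h+i) (n-k+j) := by
    intro i j hi hj
    rw [← NP_eq p i j (by omega) (by omega), ← NP_eq q _ _ (by omega) (by omega)]
    exact he i j hi hj (by omega) (by omega) (by omega) (by omega)
  have hCq2 := hq.2.2
  have hhem : h = m := by
    by_contra hne
    have hhm' : h < m := by omega
    rcases Nat.lt_or_ge h 2 with hh2 | hh2
    · -- h = 1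
      have e0 := ep 0 (k-1) (by omega) (by omega)
      rw [prow0 (k-1) (by omega)] at e0
      rw [show m - h + 0 = m - 1 by omega, show n - k + (k-1) = n-1 by omega] at e0
      rw [qbr] at e0; cases e0
    · refine hCq2 ⟨m-h, n-k, by omega, by omega, by omega, ?_, ⟨by omega, ?_⟩, ?_⟩
      · intro j' hj1 hj2
        have e0 := ep 0 (j' - (n-k)) (by omega) (by omega)
        rw [prow0 _ (by omega), show m-h+0 = m-h by omega,
          show n-k+(j'-(n-k)) = j' by omega] at e0
        rw [NP_eq q _ _ (by omega) hj2]
        exact e0.symm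
      · have e0 := ep 1 0 (by omega) (by omega)
        rw [pcol0 1 (by omega)] at e0
        rw [NP_eq q _ _ (by omega) (by omega), show n - k = n-k+0 by omega]
        simpa using e0.symm
      · intro l hl1 hl2
        have e0 := ep (l - (m-h)) 0 (by omega) (by omega)
        rw [pcol0 _ (by omega), show m-h+(l-(m-h)) = l by omega] at e0
        rw [NP_eq q _ _ (by omega) (by omega), show n - k = n-k+0 by omega]
        rw [← e0]; simp; omega
  refine ⟨hhem, ?_⟩
  by_contra hne
  have hkn' : k < n := by omega
  refine absurd ?_ hCq2
  refine ⟨0, n-k, by omega, by omega, by omega, ?_, ⟨by omega, ?_⟩, ?_⟩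
  · intro j' hj1 hj2
    rw [NP_eq q 0 j' (by omega) hj2]
    exact qrow0 j' hj2
  · have e0 := ep 1 0 (by omega) (by omega)
    rw [pcol0 1 (by omega), show m-h+1 = 1 by omega, show n-k+0 = n-k by omega] at e0
    rw [NP_eq q _ _ (by omega) (by omega), ← e0]
    simp
  · intro l hl1 hl2
    have e0 := ep l 0 (by omega) (by omega)
    rw [pcol0 _ (by omega), show m-h+l = l by omega, show n-k+0 = n-k by omega] at e0
    rw [NP_eq q _ _ (by omega) (by omega), ← e0]
    simp; omega

lemma no_BlAt {m n : ℕ} (hm : 4 ≤ m) (hn : 4 ≤ n) (p q : Fin m → Fin n → Bool)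
    (hp : p ∈ YSet m n) (hq : q ∈ YSet m n) (h k : ℕ) (hB : BlAt m n p q h k) :
    h = m ∧ k = n := by
  obtain ⟨hh1, hhm, hk1, hkn, he⟩ := hB
  obtain ⟨prow0, pcol0, pbr⟩ := Y_facts hm hn p hp
  obtain ⟨qrow0, qcol0, qbr⟩ := Y_facts hm hn q hq
  have eb : ∀ i j, i < h → j < k → NP m n p (m-h+i) j = NP m n q i (n-k+j) := by
    intro i j hi hj
    rw [← NP_eq p _ j (by omega) (by omega), ← NP_eq q i _ (by omega) (by omega)]
    exact he i j hi hj (by omega) (by omega) (by omega) (by omega)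
  have h00 := eb 0 0 (by omega) (by omega)
  rw [pcol0 (m-h+0) (by omega), qrow0 (n-k+0) (by omega)] at h00
  have hmh : m - h ≤ 1 := by
    by_contra hc
    revert h00; simp; omega
  rcases Nat.lt_or_ge h m with hlt | hge
  · -- h = m - 1
    have hh : h = m - 1 := by omega
    subst hh
    exfalso
    rcases Nat.lt_or_ge k n with hklt | hkge
    · refine hq.2.1 ⟨n-k, by omega, by omega, ?_⟩
      intro i hi1 hi2 hi3
      have e0 := eb i 0 (by omega) (by omega)
      rw [pcol0 _ (by omega)] at e0
      rw [NP_eq q _ _ (by omega) (by omega), show n - k = n-k+0 by omega]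
      rw [← e0]; simp; omega
    · have e0 := eb 1 0 (by omega) (by omega)
      rw [pcol0 _ (by omega), show n-k+0 = 0 by omega, qcol0 1 (by omega)] at e0
      revert e0; simp; omega
  · have hh : h = m := by omega
    refine ⟨hh, ?_⟩
    by_contra hne
    have hkn' : k < n := by omega
    refine absurd ?_ hq.2.2
    refine ⟨0, n-k, by omega, by omega, by omega, ?_, ⟨by omega, ?_⟩, ?_⟩
    · intro j' hj1 hj2
      rw [NP_eq q 0 j' (by omega) hj2]
      exact qrow0 j' hj2
    · have e0 := eb 1 0 (by omega) (by omega)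
      rw [pcol0 _ (by omega), show n-k+0 = n-k by omega] at e0
      rw [NP_eq q _ _ (by omega) (by omega), show 0+1 = 1 by omega, ← e0]
      simp; omega
    · intro l hl1 hl2
      have e0 := eb l 0 (by omega) (by omega)
      rw [pcol0 _ (by omega), show n-k+0 = n-k by omega] at e0
      rw [NP_eq q _ _ (by omega) (by omega), ← e0]
      simp; omega

lemma part1 {m n : ℕ} (hm : 4 ≤ m) (hn : 4 ≤ n) : NonOverlapping m n (YSet m n) := by
  rintro p hp q hq ⟨h, k, hprop, hov⟩
  rcases hov with hT | hT | hB | hB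
  · have := no_TlAt hm hn p q hp hq h k hT; omega
  · have := no_TlAt hm hn q p hq hp h k hT; omega
  · have := no_BlAt hm hn p q hp hq h k hB; omega
  · have := no_BlAt hm hn q p hq hp h k hB; omega


lemma exists_true_of_not_all_false {a b : ℕ} {f : ℕ → Bool}
    (h : ¬ ∀ l, a ≤ l → l < b → f l = false) : ∃ l, a ≤ l ∧ l < b ∧ f l = true := by
  push_neg at h
  obtain ⟨l, h1, h2, h3⟩ := h
  exact ⟨l, h1, h2, by revert h3; cases f l <;> simp⟩

lemma exists_true_of_not_all_false' {a b : ℕ} {f : ℕ → Bool}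
    (h : ¬ ∀ l, a ≤ l → l ≤ b → f l = false) : ∃ l, a ≤ l ∧ l ≤ b ∧ f l = true := by
  push_neg at h
  obtain ⟨l, h1, h2, h3⟩ := h
  exact ⟨l, h1, h2, by revert h3; cases f l <;> simp⟩

lemma findGreatest_package (P : ℕ → Prop) [DecidablePred P] (b c : ℕ)
    (hcb : c ≤ b) (hc : P c) :
    ∃ g, g ≤ b ∧ P g ∧ ∀ k, g < k → k ≤ b → ¬P k :=
  ⟨Nat.findGreatest P b, Nat.findGreatest_le _, Nat.findGreatest_spec hcb hc,
    fun _ h1 h2 => Nat.findGreatest_is_greatest h1 h2⟩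

lemma part2 {m n : ℕ} (hm : 4 ≤ m) (hn : 4 ≤ n) (p : Fin m → Fin n → Bool)
    (hp : p ∉ YSet m n) : ∃ q ∈ YSet m n, Overlap m n p q := by
  classical
  have hq0 := Q0_mem_Y (m := m) (n := n) hm hn
  -- step 1: top-left corner of p
  by_cases h00 : NP m n p 0 0 = true
  case neg =>
    rw [Bool.not_eq_true] at h00
    refine ⟨mkP m n (Q0 m), hq0, ?_⟩
    refine overlap_tl_pq p _ 1 1 (le_refl _) (by omega) (le_refl _) (by omega) ?_
    intro i j hi hj
    have hi0 : i = 0 := by omega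
    have hj0 : j = 0 := by omega
    subst hi0; subst hj0
    rw [NP_mkP _ _ _ (by omega) (by omega), h00,
      Q0_eval _ _ (by omega), gcol_ff (by omega) (by omega)]
  -- step 2: bottom-right corner
  by_cases hbr : NP m n p (m-1) (n-1) = true
  case pos =>
    refine ⟨mkP m n (Q0 m), hq0, ?_⟩
    refine overlap_tl_qp p _ 1 1 (le_refl _) (by omega) (le_refl _) (by omega) ?_
    intro i j hi hj
    have hi0 : i = 0 := by omega
    have hj0 : j = 0 := by omega
    subst hi0; subst hj0
    rw [NP_mkP _ _ _ (by omega) (by omega), show m-1+0 = m-1 by omega,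
      show n-1+0 = n-1 by omega, hbr, Q0_eval0, c0col_tt (by omega)]
  rw [Bool.not_eq_true] at hbr
  -- step 3: bottom-left corner
  by_cases hbl : NP m n p (m-1) 0 = true
  case pos =>
    refine ⟨mkP m n (Q0 m), hq0, ?_⟩
    refine overlap_bl_pq p _ 1 1 (le_refl _) (by omega) (le_refl _) (by omega) ?_
    intro i j hi hj
    have hi0 : i = 0 := by omega
    have hj0 : j = 0 := by omega
    subst hi0; subst hj0
    rw [NP_mkP _ _ _ (by omega) (by omega), show m-1+0 = m-1 by omega, hbl,
      Q0_eval _ _ (by omega), show (0:ℕ) = m-1-(m-1) by omega]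
    rw [show m-1-(m-1) = 0 by omega, gcol_tt0]
  rw [Bool.not_eq_true] at hbl
  -- step 4: top-right corner
  by_cases htr : NP m n p 0 (n-1) = true
  case neg =>
    rw [Bool.not_eq_true] at htr
    refine ⟨mkP m n (Q0 m), hq0, ?_⟩
    refine overlap_bl_qp p _ 1 1 (le_refl _) (by omega) (le_refl _) (by omega) ?_
    intro i j hi hj
    have hi0 : i = 0 := by omega
    have hj0 : j = 0 := by omega
    subst hi0; subst hj0
    rw [NP_mkP _ _ _ (by omega) (by omega), show m-1+0 = m-1 by omega,
      show n-1+0 = n-1 by omega, htr, Q0_eval0, c0col_ff (by omega)]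
  -- step 5: cell (1,0)
  by_cases h10 : NP m n p 1 0 = true
  case neg =>
    rw [Bool.not_eq_true] at h10
    refine ⟨mkP m n (Q0 m), hq0, ?_⟩
    refine overlap_tl_pq p _ 2 1 (by omega) (by omega) (le_refl _) (by omega) ?_
    intro i j hi hj
    have hj0 : j = 0 := by omega
    subst hj0
    rw [NP_mkP _ _ _ (by omega) (by omega)]
    rcases Nat.lt_or_ge i 1 with hi1 | hi1
    · have h : i = 0 := by omega
      subst h
      rw [h00, Q0_eval _ _ (by omega), show m-2+0 = m-2 by omega, gcol_tt2]
    · have h : i = 1 := by omega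
      subst h
      rw [h10, show m-2+1 = m-1 by omega, Q0_eval _ _ (by omega),
        gcol_ff (by omega) (by omega)]
  -- step 6: a zero in the first row
  by_cases hr0 : ∃ j, j < n ∧ NP m n p 0 j = false
  case pos =>
    obtain ⟨j, hj, hPj⟩ := hr0
    have hj1 : 1 ≤ j := by
      rcases Nat.eq_zero_or_pos j with h | h
      · subst h; rw [h00] at hPj; cases hPj
      · exact h
    exact case6 hm hn p j hj1 hj hPj
  push_neg at hr0
  have hrow0all : ∀ x, x < n → NP m n p 0 x = true := by
    intro x hx
    have := hr0 x hx
    revert this; cases (NP m n p 0 x) <;> simp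
  -- step 7: a one in the first column below row 1
  by_cases hcx : ∃ i, 2 ≤ i ∧ i < m ∧ NP m n p i 0 = true
  case pos =>
    obtain ⟨i, hi2, him, hiv⟩ := hcx
    have hCi := Nat.findGreatest_spec (P := fun l => 2 ≤ l ∧ NP m n p l 0 = true)
      (by omega : i ≤ m-1) ⟨hi2, hiv⟩
    set istar := Nat.findGreatest (fun l => 2 ≤ l ∧ NP m n p l 0 = true) (m-1) with histar
    have hile : istar ≤ m - 1 := Nat.findGreatest_le _
    have hine : istar ≠ m - 1 := by
      intro h
      have h2 := hCi.2
      rw [h, hbl] at h2; cases h2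
    have hgr : ∀ l, istar < l → l ≤ m-1 → NP m n p l 0 = false := by
      intro l hl1 hl2
      have h3 := Nat.findGreatest_is_greatest hl1 hl2
      push_neg at h3
      have := h3 (by omega)
      revert this; cases (NP m n p l 0) <;> simp
    refine ⟨mkP m n (Q0 m), hq0, ?_⟩
    refine overlap_bl_pq p _ (m - istar) 1 (by omega) (by omega) (le_refl _) (by omega) ?_
    intro i' j hi' hj
    have hj0 : j = 0 := by omega
    subst hj0
    rw [NP_mkP _ _ _ (by omega) (by omega), show m-(m-istar)+i' = istar + i' by omega]
    rcases Nat.eq_zero_or_pos i' with h0 | h1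
    · subst h0
      rw [Nat.add_zero, hCi.2, Q0_eval _ _ (by omega), show (0:ℕ) = 0+0-0 by omega]
      rw [show (0+0-0:ℕ) = 0 from rfl, gcol_tt0]
    · rw [hgr (istar + i') (by omega) (by omega), Q0_eval _ _ (by omega),
        gcol_ff (by omega) (by omega)]
  push_neg at hcx
  have hcol0all : ∀ l, l < m → NP m n p l 0 = decide (l < 2) := by
    intro l hl
    rcases Nat.lt_or_ge l 2 with h2 | h2
    · interval_cases l
      · rw [h00]; simp
      · rw [h10]; simp
    · have := hcx l h2 hl
      revert this; cases (NP m n p l 0) <;> simp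
      omega
  -- step A: a cond2-violation at some (i,j), 2 ≤ i ≤ m-2
  by_cases hA : ∃ i j, 2 ≤ i ∧ i ≤ m-2 ∧ 1 ≤ j ∧ j < n ∧
      (∀ x, j ≤ x → x < n → NP m n p i x = true) ∧ NP m n p (i+1) j = true ∧
      (∀ l, i+2 ≤ l → l < m → NP m n p l j = false)
  case pos =>
    obtain ⟨i, j, h1, h2, h3, h4, h5, h6, h7⟩ := hA
    exact caseA hm hn p i j h1 h2 h3 h4 h5 h6 h7
  have NA : ∀ i j, 2 ≤ i → i ≤ m-2 → 1 ≤ j → j < n →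
      (∀ x, j ≤ x → x < n → NP m n p i x = true) → NP m n p (i+1) j = true →
      ∃ l, i+2 ≤ l ∧ l < m ∧ NP m n p l j = true := by
    intro i j h1 h2 h3 h4 h5 h6
    refine exists_true_of_not_all_false (fun h7 => hA ?_)
    exact ⟨i, j, h1, h2, h3, h4, h5, h6, h7⟩
  -- step B: last column all zero in rows 1..m-2
  by_cases hB : ∀ l, 1 ≤ l → l ≤ m-2 → NP m n p l (n-1) = false
  case pos =>
    refine ⟨mkP m n (Q0 m), hq0, ?_⟩
    refine overlap_bl_qp p _ (m-1) 1 (by omega) (by omega) (le_refl _) (by omega) ?_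
    intro i j hi hj
    have hj0 : j = 0 := by omega
    subst hj0
    rw [NP_mkP _ _ _ (by omega) (by omega), show m-(m-1)+i = 1+i by omega,
      show n-1+0 = n-1 by omega]
    rcases Nat.eq_zero_or_pos i with h0 | h1
    · subst h0
      rw [hrow0all (n-1) (by omega), Q0_eval0, c0col_tt (by omega)]
    · rw [hB i h1 (by omega), Q0_eval0, c0col_ff (by omega)]
  obtain ⟨l₀, hl₀1, hl₀2, hl₀v⟩ := exists_true_of_not_all_false' hB
  -- step C1: cond2-violation at (1, n-1)
  by_cases hC1 : NP m n p 1 (n-1) = true ∧ NP m n p 2 (n-1) = true ∧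
      ∀ l, 3 ≤ l → l < m → NP m n p l (n-1) = false
  case pos =>
    refine ⟨mkP m n (Q0 m), hq0, ?_⟩
    refine overlap_tl_qp p _ (m-1) 1 (by omega) (by omega) (le_refl _) (by omega) ?_
    intro i j hi hj
    have hj0 : j = 0 := by omega
    subst hj0
    rw [NP_mkP _ _ _ (by omega) (by omega), show m-(m-1)+i = 1+i by omega,
      show n-1+0 = n-1 by omega]
    rcases Nat.lt_or_ge i 2 with h2 | h2
    · interval_cases i
      · rw [hC1.1, Q0_eval0, c0col_tt (by omega)]
      · rw [hC1.2.1, Q0_eval0, c0col_tt (by omega)]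
    · rw [hC1.2.2 (1+i) (by omega) (by omega), Q0_eval0, c0col_ff (by omega)]
  -- step C0: cond2-violation at (0, n-1)
  by_cases hC0 : NP m n p 1 (n-1) = true ∧ ∀ l, 2 ≤ l → l < m → NP m n p l (n-1) = false
  case pos =>
    refine ⟨mkP m n (Q0 m), hq0, ?_⟩
    refine overlap_tl_qp p _ m 1 (by omega) (le_refl _) (le_refl _) (by omega) ?_
    intro i j hi hj
    have hj0 : j = 0 := by omega
    subst hj0
    rw [NP_mkP _ _ _ (by omega) (by omega), show m-m+i = i by omega,
      show n-1+0 = n-1 by omega]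
    rcases Nat.lt_or_ge i 2 with h2 | h2
    · interval_cases i
      · rw [hrow0all (n-1) (by omega), Q0_eval0, c0col_tt (by omega)]
      · rw [hC0.1, Q0_eval0, c0col_tt (by omega)]
    · rw [hC0.2 i h2 hi, Q0_eval0, c0col_ff (by omega)]
  -- the interior anchor set is nonempty
  have hexS : ∃ c, 1 ≤ c ∧ c ≤ n-2 ∧
      ((∀ l, 1 ≤ l → l ≤ m-2 → NP m n p l c = false) ∨
       (NP m n p 1 c = true ∧ ∀ l, 2 ≤ l → l < m → NP m n p l c = false) ∨
       ((∀ x, c ≤ x → x < n → NP m n p 1 x = true) ∧ NP m n p 2 c = true ∧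
         ∀ l, 3 ≤ l → l < m → NP m n p l c = false)) := by
    by_contra hno
    apply hp
    have hpe : p = mkP m n (NP m n p) := by
      funext i j
      simp only [mkP, NP, dif_pos (And.intro i.2 j.2)]
    rw [hpe]
    apply mem_Y_of hm hn
    · exact hrow0all
    · exact hcol0all
    · exact hbr
    · exact ⟨l₀, hl₀1, by omega, hl₀v⟩
    · -- no 110+ suffix on the last column
      intro k hk1 hk2
      rintro ⟨ha, hb, hc⟩
      rcases Nat.lt_or_ge (m-k-2) 2 with hi2 | hi2
      · rcases Nat.lt_or_ge (m-k-2) 1 with hi1 | hi1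
        · rw [show m-k-1 = 1 by omega] at hb
          refine hC0 ⟨hb, ?_⟩
          intro l hl2 hlm
          exact hc l (by omega) hlm
        · rw [show m-k-2 = 1 by omega] at ha
          rw [show m-k-1 = 2 by omega] at hb
          refine hC1 ⟨ha, hb, ?_⟩
          intro l hl3 hlm
          exact hc l (by omega) hlm
      · obtain ⟨l, hla, hlb, hlc⟩ := NA (m-k-2) (n-1) hi2 (by omega) (by omega) (by omega)
          (fun x hx1 hx2 => by rw [show x = n-1 by omega]; exact ha)
          (by rwa [show m-k-2+1 = m-k-1 by omega])
        rw [hc l (by omega) hlb] at hlc; cases hlc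
    · -- cond1
      intro j hj1 hjn
      rcases Nat.lt_or_ge j (n-1) with hj2 | hj2
      · have hx : ¬ ∀ l, 1 ≤ l → l ≤ m-2 → NP m n p l j = false :=
          fun hv => hno ⟨j, hj1, by omega, Or.inl hv⟩
        obtain ⟨l, ha, hb, hc⟩ := exists_true_of_not_all_false' hx
        exact ⟨l, ha, by omega, hc⟩
      · exact ⟨l₀, hl₀1, by omega, by rwa [show j = n-1 by omega]⟩
    · -- cond2
      intro i j hi hj hne hrow hstep1 hstep
      rcases Nat.eq_zero_or_pos j with hj0 | hj1
      · subst hj0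
        rcases Nat.lt_or_ge i 2 with h2 | h2
        · rcases Nat.lt_or_ge i 1 with h1 | h1
          · exact absurd ⟨by omega, rfl⟩ hne
          · rw [show i+1 = 2 by omega, hcol0all 2 (by omega)] at hstep
            simp at hstep
        · have hq := hrow 0 (le_refl _) (by omega)
          rw [hcol0all i (by omega)] at hq
          simp at hq; omega
      · rcases Nat.lt_or_ge i 2 with h2 | h2
        · rcases Nat.lt_or_ge i 1 with h1 | h1
          · -- i = 0
            have hi0 : i = 0 := by omega
            subst hi0
            rcases Nat.lt_or_ge j (n-1) with hj2 | hj2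
            · have hx : ¬ ∀ l, 2 ≤ l → l < m → NP m n p l j = false :=
                fun hv => hno ⟨j, hj1, by omega, Or.inr (Or.inl ⟨hstep, hv⟩)⟩
              exact exists_true_of_not_all_false hx
            · have hjn : j = n-1 := by omega
              subst hjn
              have hx : ¬ ∀ l, 2 ≤ l → l < m → NP m n p l (n-1) = false :=
                fun hv => hC0 ⟨hstep, hv⟩
              exact exists_true_of_not_all_false hx
          · -- i = 1
            have hi1 : i = 1 := by omega
            subst hi1
            rcases Nat.lt_or_ge j (n-1) with hj2 | hj2
            · have hx : ¬ ∀ l, 3 ≤ l → l < m → NP m n p l j = false :=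
                fun hv => hno ⟨j, hj1, by omega, Or.inr (Or.inr
                  ⟨fun x hx1 hx2 => hrow x hx1 hx2, by rwa [show (2:ℕ) = 1+1 by omega], hv⟩)⟩
              exact exists_true_of_not_all_false hx
            · have hjn : j = n-1 := by omega
              subst hjn
              have hx : ¬ ∀ l, 3 ≤ l → l < m → NP m n p l (n-1) = false :=
                fun hv => hC1 ⟨hrow (n-1) (le_refl _) (by omega),
                  by rwa [show (2:ℕ) = 1+1 by omega], hv⟩
              exact exists_true_of_not_all_false hx
        · exact NA i j h2 (by omega) hj1 hj hrow hstep
  -- choose the rightmost interior anchor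
  obtain ⟨c₁, hc₁1, hc₁2, hD₁⟩ := hexS
  obtain ⟨cstar, hcle, hScstar, hgrS⟩ := findGreatest_package (fun c => 1 ≤ c ∧
      ((∀ l, 1 ≤ l → l ≤ m-2 → NP m n p l c = false) ∨
       (NP m n p 1 c = true ∧ ∀ l, 2 ≤ l → l < m → NP m n p l c = false) ∨
       ((∀ x, c ≤ x → x < n → NP m n p 1 x = true) ∧ NP m n p 2 c = true ∧
         ∀ l, 3 ≤ l → l < m → NP m n p l c = false))) (n-2) c₁ hc₁2 ⟨hc₁1, hD₁⟩
  have hc1c : 1 ≤ cstar := hScstar.1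
  have NV1 : ∀ c', cstar < c' → c' < n → ∃ l, 1 ≤ l ∧ l ≤ m-2 ∧ NP m n p l c' = true := by
    intro c' h1 h2
    rcases Nat.lt_or_ge c' (n-1) with h3 | h3
    · refine exists_true_of_not_all_false' (fun hv => hgrS c' h1 (by omega) ?_)
      exact ⟨by omega, Or.inl hv⟩
    · exact ⟨l₀, hl₀1, hl₀2, by rwa [show c' = n-1 by omega]⟩
  have N20 : ∀ c', cstar < c' → c' < n →
      ¬(NP m n p 1 c' = true ∧ ∀ l, 2 ≤ l → l < m → NP m n p l c' = false) := by
    intro c' h1 h2 hcc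
    rcases Nat.lt_or_ge c' (n-1) with h3 | h3
    · exact hgrS c' h1 (by omega) ⟨by omega, Or.inr (Or.inl hcc)⟩
    · rw [show c' = n-1 by omega] at hcc
      exact hC0 hcc
  rcases hScstar.2 with hV1 | hC20 | hC21
  · -- V1 at cstar: find the row index i₀ and apply caseHb
    obtain ⟨lstar, hlle, hLl, hlgr0⟩ := findGreatest_package
      (fun l => 1 ≤ l ∧ NP m n p l (n-1) = true) (m-2) l₀ hl₀2 ⟨hl₀1, hl₀v⟩
    have hlgr : ∀ l', lstar < l' → l' < m → NP m n p l' (n-1) = false := by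
      intro l' h1 h2
      rcases Nat.lt_or_ge l' (m-1) with h3 | h3
      · have h4 := hlgr0 l' h1 (by omega)
        push_neg at h4
        have := h4 (by omega)
        revert this; cases (NP m n p l' (n-1)) <;> simp
      · rwa [show l' = m-1 by omega]
    have hl2 : 2 ≤ lstar := by
      by_contra hcon
      have hl1 : lstar = 1 := by omega
      have hLv := hLl.2
      rw [hl1] at hLv
      refine hC0 ⟨hLv, ?_⟩
      intro l hl2 hlm
      exact hlgr l (by omega) hlm
    have hsi : NP m n p (lstar - 1) (n-1) = false := by
      by_contra hcon
      rw [Bool.not_eq_false] at hcon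
      rcases Nat.lt_or_ge (lstar - 1) 2 with hls2 | hls2
      · have hls1 : lstar = 2 := by omega
        have hc1' := hcon
        rw [show lstar - 1 = 1 by omega] at hc1'
        have hc2' := hLl.2
        rw [hls1] at hc2'
        refine hC1 ⟨hc1', hc2', ?_⟩
        intro l hl3 hlm
        exact hlgr l (by omega) hlm
      · obtain ⟨l, hla, hlb, hlc⟩ := NA (lstar - 1) (n-1) hls2 (by omega) (by omega)
          (by omega) (fun x hx1 hx2 => by rw [show x = n-1 by omega]; exact hcon)
          (by rw [show lstar - 1 + 1 = lstar by omega]; exact hLl.2)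
        rw [hlgr l (by omega) hlb] at hlc; cases hlc
    exact caseHb hm hn p cstar lstar hc1c hcle hl2 hlle hrow0all hV1 hsi NV1
  · -- C20 at cstar: apply caseHd
    have NE : ∀ c', cstar ≤ c' → c' < n →
        ¬((∀ x, c' ≤ x → x < n → NP m n p (m-2) x = true) ∧
          NP m n p (m-1) c' = true) := by
      rintro c' h1 h2 ⟨hro, hst⟩
      obtain ⟨l, hla, hlb, -⟩ := NA (m-2) c' (by omega) (le_refl _) (by omega) h2 hro
        (by rwa [show m-2+1 = m-1 by omega])
      omega
    exact caseHd hm hn p cstar hc1c hcle hrow0all hC20.1 hC20.2 NV1 N20 NE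
  · -- C21 at cstar: apply caseHc
    obtain ⟨hrow1, hP2, hz⟩ := hC21
    have N20' : ∀ c', cstar < c' → c' < n →
        ¬(∀ l, 2 ≤ l → l < m → NP m n p l c' = false) := by
      intro c' h1 h2 hall
      exact N20 c' h1 h2 ⟨hrow1 c' (by omega) h2, hall⟩
    have N21' : ∀ c', cstar < c' → c' < n →
        ¬(NP m n p 2 c' = true ∧ ∀ l, 3 ≤ l → l < m → NP m n p l c' = false) := by
      rintro c' h1 h2 ⟨ha, hb⟩
      rcases Nat.lt_or_ge c' (n-1) with h3 | h3
      · exact hgrS c' h1 (by omega) ⟨by omega, Or.inr (Or.inr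
          ⟨fun x hx1 hx2 => hrow1 x (by omega) hx2, ha, hb⟩)⟩
      · rw [show c' = n-1 by omega] at ha hb
        exact hC1 ⟨hrow1 (n-1) (by omega) (by omega), ha, hb⟩
    exact caseHc hm hn p cstar hc1c hcle hrow1 hP2 hz N20' N21'


/-- Y(m,n) is a NENO set: non-overlapping and non-expandable. -/
theorem stmt13 (m n : ℕ) (hm : 4 ≤ m) (hn : 4 ≤ n) :
    NonOverlapping m n (YSet m n) ∧
    ∀ p : Fin m → Fin n → Bool, p ∉ YSet m n → ∃ q ∈ YSet m n, Overlap m n p q := by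
  exact ⟨part1 hm hn, fun p hp => part2 hm hn p hp⟩


end Neno
end

section
/- For integers m, n ≥ 1 and q ≥ 1 with N = max{m,n}, every non-overlapping set X of pictures of size (m,n) over an alphabet of cardinality q satisfies |X| ≤ q^{mn} / (2N − 1). -/
namespace Neno

variable {α : Type*}

/-! ### Auxiliary material for the proof -/

lemma aux_mod_shift (L s j : ℕ) (hL : 0 < L) (hs : s < L) (hj : j < L) :
    ((s + j) % L + L - s) % L = j := by
  have h1 : (s + j) % L + L - s = (s + j) % L + (L - s) := by omega
  rw [h1, Nat.mod_add_mod]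
  have h2 : s + j + (L - s) = j + L := by omega
  rw [h2, Nat.add_mod_right, Nat.mod_eq_of_lt hj]

lemma aux_mod_shift2 (L s d j : ℕ) (hL : 0 < L) (hs : s < L) (hdj : d + j < L) :
    (((s + d) % L + j) % L + L - s) % L = d + j := by
  rw [Nat.mod_add_mod]
  have h1 : (s + d + j) % L + L - s = (s + d + j) % L + (L - s) := by omega
  rw [h1, Nat.mod_add_mod]
  have h2 : s + d + j + (L - s) = (d + j) + L := by omega
  rw [h2, Nat.add_mod_right, Nat.mod_eq_of_lt hdj]

/-- Embed picture `p` into a cyclic word of width `2n-1`, starting at column `t`,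
filling the remaining `n-1` columns with `f`. -/
def Phi {α : Type*} (m n : ℕ) (hn : 1 ≤ n) (p : Fin m → Fin n → α) (t : Fin (2 * n - 1))
    (f : Fin m → Fin (n - 1) → α) : Fin m → Fin (2 * n - 1) → α :=
  fun i c =>
    if h : (c.val + (2 * n - 1) - t.val) % (2 * n - 1) < n then
      p i ⟨(c.val + (2 * n - 1) - t.val) % (2 * n - 1), h⟩
    else
      f i ⟨(c.val + (2 * n - 1) - t.val) % (2 * n - 1) - n, by
        have := Nat.mod_lt (c.val + (2 * n - 1) - t.val) (show 0 < 2 * n - 1 by omega)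
        omega⟩

lemma Phi_eval_lt {α : Type*} (m n : ℕ) (hn : 1 ≤ n) (p : Fin m → Fin n → α)
    (t : Fin (2 * n - 1)) (f : Fin m → Fin (n - 1) → α) (i : Fin m) (c : Fin (2 * n - 1))
    (j : ℕ) (hj : j < n) (hd : (c.val + (2 * n - 1) - t.val) % (2 * n - 1) = j) :
    Phi m n hn p t f i c = p i ⟨j, hj⟩ := by
  unfold Phi
  simp only [hd]
  rw [dif_pos hj]

lemma Phi_eval_ge {α : Type*} (m n : ℕ) (hn : 1 ≤ n) (p : Fin m → Fin n → α)
    (t : Fin (2 * n - 1)) (f : Fin m → Fin (n - 1) → α) (i : Fin m) (c : Fin (2 * n - 1))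
    (j : ℕ) (hj : j < n - 1) (hd : (c.val + (2 * n - 1) - t.val) % (2 * n - 1) = n + j) :
    Phi m n hn p t f i c = f i ⟨j, hj⟩ := by
  unfold Phi
  simp only [hd]
  rw [dif_neg (by omega : ¬ n + j < n)]
  simp only [Nat.add_sub_cancel_left]

lemma aux_key {α : Type*} [Fintype α] (m n q : ℕ) (hm : 1 ≤ m) (hn : 1 ≤ n)
    (hcard : Fintype.card α = q) (X : Set (Fin m → Fin n → α))
    (hX : NonOverlapping m n X) :
    X.ncard * ((2 * n - 1) * q ^ (m * (n - 1))) ≤ q ^ (m * (2 * n - 1)) := by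
  classical
  haveI : Fintype ↥X := Fintype.ofFinite _
  have hL : 0 < 2 * n - 1 := by omega
  set L := 2 * n - 1 with hLdef
  -- injectivity
  have hinj : Function.Injective
      (fun x : ↥X × Fin L × (Fin m → Fin (n - 1) → α) =>
        Phi m n hn x.1.val x.2.1 x.2.2) := by
    rintro ⟨p, t, f⟩ ⟨p', t', f'⟩ heq
    simp only at heq
    set w := Phi m n hn p.val t f with hwdef
    have hp : ∀ (i : Fin m) (c : Fin L) (j : ℕ) (hj : j < n),
        (c.val + L - t.val) % L = j → w i c = p.val i ⟨j, hj⟩ :=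
      fun i c j hj hd => Phi_eval_lt m n hn p.val t f i c j hj hd
    have hp' : ∀ (i : Fin m) (c : Fin L) (j : ℕ) (hj : j < n),
        (c.val + L - t'.val) % L = j → w i c = p'.val i ⟨j, hj⟩ := by
      intro i c j hj hd
      exact (congrFun (congrFun heq i) c).trans
        (Phi_eval_lt m n hn p'.val t' f' i c j hj hd)
    -- the overlap-deriving helper
    have sub : ∀ (P P' : Fin m → Fin n → α) (s s' : Fin L) (d : ℕ), 1 ≤ d → d < n →
        s'.val = (s.val + d) % L →
        (∀ (i : Fin m) (c : Fin L) (j : ℕ) (hj : j < n),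
          (c.val + L - s.val) % L = j → w i c = P i ⟨j, hj⟩) →
        (∀ (i : Fin m) (c : Fin L) (j : ℕ) (hj : j < n),
          (c.val + L - s'.val) % L = j → w i c = P' i ⟨j, hj⟩) →
        TlAt m n P' P m (n - d) := by
      intro P P' s s' d hd1 hdn hss' hP hP'
      refine ⟨hm, le_rfl, by omega, by omega, ?_⟩
      intro i j hih hjk hi hj hi' hj'
      have hc : (s'.val + j) % L < L := Nat.mod_lt _ hL
      have e1 : w ⟨i, hi⟩ ⟨(s'.val + j) % L, hc⟩ = P' ⟨i, hi⟩ ⟨j, hj⟩ :=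
        hP' _ _ j hj (aux_mod_shift L s'.val j hL s'.isLt (by omega))
      have e2 : w ⟨i, hi⟩ ⟨(s'.val + j) % L, hc⟩ = P ⟨i, hi⟩ ⟨d + j, by omega⟩ := by
        apply hP _ _ (d + j) (by omega)
        show ((s'.val + j) % L + L - s.val) % L = d + j
        rw [hss']
        exact aux_mod_shift2 L s.val d j hL s.isLt (by omega)
      simp only [show m - m + i = i from by omega,
        show n - (n - d) + j = d + j from by omega]
      exact e1.symm.trans e2
    by_cases htt : t = t'
    · subst htt
      have hpp : p = p' := by
        apply Subtype.ext; funext i j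
        have hc : (t.val + j.val) % L < L := Nat.mod_lt _ hL
        have e1 := hp i ⟨_, hc⟩ j.val j.isLt
          (aux_mod_shift L t.val j.val hL t.isLt (by omega))
        have e2 := hp' i ⟨_, hc⟩ j.val j.isLt
          (aux_mod_shift L t.val j.val hL t.isLt (by omega))
        have := e1.symm.trans e2
        simpa using this
      have hff : f = f' := by
        funext i j
        have hjL : n + j.val < L := by omega
        have hc : (t.val + (n + j.val)) % L < L := Nat.mod_lt _ hL
        have e1 := Phi_eval_ge m n hn p.val t f i ⟨_, hc⟩ j.val j.isLt
          (aux_mod_shift L t.val _ hL t.isLt hjL)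
        have e2 := Phi_eval_ge m n hn p'.val t f' i ⟨_, hc⟩ j.val j.isLt
          (aux_mod_shift L t.val _ hL t.isLt hjL)
        rw [← hwdef, heq] at e1
        have := e1.symm.trans e2
        simpa using this
      rw [hpp, hff]
    · exfalso
      have ht1 := t.isLt
      have ht2 := t'.isLt
      set d := (t'.val + L - t.val) % L with hd
      have hdL : d < L := Nat.mod_lt _ hL
      have hd_cases : d = t'.val + L - t.val ∨ d + L = t'.val + L - t.val := by
        rcases Nat.lt_or_ge (t'.val + L - t.val) L with h | h
        · left; rw [hd]; exact Nat.mod_eq_of_lt h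
        · right
          have h3 : (t'.val + L - t.val) % L = t'.val + L - t.val - L := by
            rw [Nat.mod_eq_sub_mod h]
            exact Nat.mod_eq_of_lt (by omega)
          omega
      have hd1 : 1 ≤ d := by
        by_contra h0
        exact htt (Fin.ext (by omega))
      rcases Nat.lt_or_ge d n with hdn | hdn
      · have hs' : t'.val = (t.val + d) % L := by
          have hcase : t.val + d = t'.val ∨ t.val + d = t'.val + L := by omega
          rcases hcase with h | h
          · rw [h, Nat.mod_eq_of_lt ht2]
          · rw [h, Nat.add_mod_right, Nat.mod_eq_of_lt ht2]
        have htl := sub p.val p'.val t t' d hd1 hdn hs' hp hp'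
        exact hX p'.val p'.prop p.val p.prop ⟨m, n - d, Or.inr (by omega), Or.inl htl⟩
      · have hd2n : L - d < n := by omega
        have hd21 : 1 ≤ L - d := by omega
        have hs : t.val = (t'.val + (L - d)) % L := by
          have hcase : t'.val + (L - d) = t.val ∨ t'.val + (L - d) = t.val + L := by omega
          rcases hcase with h | h
          · rw [h, Nat.mod_eq_of_lt ht1]
          · rw [h, Nat.add_mod_right, Nat.mod_eq_of_lt ht1]
        have htl := sub p'.val p.val t' t (L - d) hd21 hd2n hs hp' hp
        exact hX p.val p.prop p'.val p'.prop
          ⟨m, n - (L - d), Or.inr (by omega), Or.inl htl⟩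
  have hle := Fintype.card_le_of_injective _ hinj
  simp only [Fintype.card_prod, Fintype.card_fun, Fintype.card_fin, hcard] at hle
  have hnc : X.ncard = Fintype.card ↥X := by
    rw [← Nat.card_coe_set_eq, Nat.card_eq_fintype_card]
  rw [hnc]
  calc Fintype.card ↥X * (L * q ^ (m * (n - 1)))
      = Fintype.card ↥X * (L * (q ^ (n - 1)) ^ m) := by rw [← pow_mul, Nat.mul_comm m (n-1)]
    _ ≤ (q ^ L) ^ m := hle
    _ = q ^ (m * L) := by rw [← pow_mul, Nat.mul_comm L m]

lemma aux_key_real {α : Type*} [Fintype α] (m n q : ℕ) (hm : 1 ≤ m) (hn : 1 ≤ n)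
    (hq : 1 ≤ q) (hcard : Fintype.card α = q) (X : Set (Fin m → Fin n → α))
    (hX : NonOverlapping m n X) :
    (X.ncard : ℝ) ≤ (q : ℝ) ^ (m * n) / (2 * (n : ℝ) - 1) := by
  have h := aux_key m n q hm hn hcard X hX
  have hq0 : 0 < q ^ (m * (n - 1)) := Nat.pow_pos (by omega)
  have h2 : X.ncard * (2 * n - 1) ≤ q ^ (m * n) := by
    have hexp : m * (2 * n - 1) = m * n + m * (n - 1) := by
      have h3 : 2 * n - 1 = n + (n - 1) := by omega
      rw [h3, Nat.mul_add]
    rw [hexp, pow_add, ← Nat.mul_assoc] at h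
    exact Nat.le_of_mul_le_mul_right h hq0
  have hnr : (1 : ℝ) ≤ (n : ℝ) := by exact_mod_cast hn
  rw [le_div_iff₀ (by linarith)]
  have hcast : ((2 * n - 1 : ℕ) : ℝ) = 2 * (n : ℝ) - 1 := by
    have h4 : (1 : ℕ) ≤ 2 * n := by omega
    push_cast [Nat.cast_sub h4]
    ring
  calc (X.ncard : ℝ) * (2 * (n : ℝ) - 1)
      = ((X.ncard * (2 * n - 1) : ℕ) : ℝ) := by rw [Nat.cast_mul, hcast]
    _ ≤ ((q ^ (m * n) : ℕ) : ℝ) := by exact_mod_cast h2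
    _ = (q : ℝ) ^ (m * n) := by push_cast; ring

lemma aux_tlAt_transpose {α : Type*} {m n h k : ℕ} {p q : Fin m → Fin n → α}
    (H : TlAt n m (fun j i => p i j) (fun j i => q i j) h k) : TlAt m n p q k h := by
  obtain ⟨c1, c2, c3, c4, hc⟩ := H
  exact ⟨c3, c4, c1, c2, fun i j hik hjh hi hj hi' hj' =>
    hc j i hjh hik hj hi hj' hi'⟩

lemma aux_blAt_transpose {α : Type*} {m n h k : ℕ} {p q : Fin m → Fin n → α}
    (H : BlAt n m (fun j i => p i j) (fun j i => q i j) h k) : BlAt m n q p k h := by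
  obtain ⟨c1, c2, c3, c4, hc⟩ := H
  exact ⟨c3, c4, c1, c2, fun i j hik hjh hi' hj hi hj' =>
    (hc j i hjh hik hj' hi hj hi').symm⟩

lemma aux_nonoverlapping_transpose {α : Type*} (m n : ℕ) (X : Set (Fin m → Fin n → α))
    (hX : NonOverlapping m n X) :
    NonOverlapping n m ((fun p (j : Fin n) (i : Fin m) => p i j) '' X) := by
  rintro _ ⟨p, hp, rfl⟩ _ ⟨p', hp', rfl⟩ ⟨h, k, hprop, hov⟩
  apply hX p hp p' hp'
  refine ⟨k, h, hprop.symm, ?_⟩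
  rcases hov with h1 | h1 | h1 | h1
  · exact Or.inl (aux_tlAt_transpose h1)
  · exact Or.inr (Or.inl (aux_tlAt_transpose h1))
  · exact Or.inr (Or.inr (Or.inr (aux_blAt_transpose h1)))
  · exact Or.inr (Or.inr (Or.inl (aux_blAt_transpose h1)))

/-- Upper bound on the size of a non-overlapping set of pictures:
|X| ≤ q^{mn} / (2·max{m,n} − 1). -/
theorem stmt15 {α : Type*} [Fintype α] (m n q : ℕ) (hm : 1 ≤ m) (hn : 1 ≤ n)
    (hq : 1 ≤ q) (hcard : Fintype.card α = q)
    (X : Set (Fin m → Fin n → α)) (hX : NonOverlapping m n X) :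
    (X.ncard : ℝ) ≤ (q : ℝ) ^ (m * n) / (2 * (max m n : ℝ) - 1) := by
  rcases le_total m n with hmn | hnm
  · rw [show ((m : ℝ) ⊔ (n : ℝ)) = (n : ℝ) from max_eq_right (by exact_mod_cast hmn)]
    exact aux_key_real m n q hm hn hq hcard X hX
  · rw [show ((m : ℝ) ⊔ (n : ℝ)) = (m : ℝ) from max_eq_left (by exact_mod_cast hnm)]
    have hTinj : Function.Injective (fun p (j : Fin n) (i : Fin m) => p i j :
        (Fin m → Fin n → α) → (Fin n → Fin m → α)) := by
      intro a b hab
      funext i j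
      exact congrFun (congrFun hab j) i
    have hY := aux_nonoverlapping_transpose m n X hX
    have h := aux_key_real n m q hn hm hq hcard _ hY
    rw [Set.ncard_image_of_injective X hTinj] at h
    rw [show n * m = m * n from Nat.mul_comm n m] at h
    exact h

end Neno
end
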